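/- arXiv:2604.14997 — 6 statements merged into one kernel-verified Lean document; each statement's English description precedes it below -/
import Mathlib

section
/- Let a < b be real numbers and h : [a,b] → ℝ a C² function such that h' has constant sign on [a,b] and h'' does not vanish on [a,b]. Then for all x, y ∈ [a,b], |h(x) - h(y)| ≥ M₁|x - y|², where M₁ = (1/2)·min_{z∈[a,b]}|h''(z)|. -/
/-!
Since `h''` is continuous and never vanishes, it has constant sign, so after replacing `h` by `-h`
we may assume `h'' ≥ M` with `M = min |h''|`. Then `t ↦ h t - M t² / 2` is convex, and its tangent
line at `x` gives `h y - h x ≥ h' x (y - x) + M (y - x)² / 2`. As `h'` has constant sign, the linear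
term is nonnegative at one of the two points `x`, `y`, and the tangent there yields the bound.
-/

open Set

theorem IsPreconnected.forall_pos_or_forall_neg {X : Type*} [TopologicalSpace X] {s : Set X}
    (hs : IsPreconnected s) {f : X → ℝ} (hf : ContinuousOn f s) (hf0 : ∀ x ∈ s, f x ≠ 0) :
    (∀ x ∈ s, 0 < f x) ∨ (∀ x ∈ s, f x < 0) := by
  by_contra! ⟨⟨u, hu, hfu⟩, ⟨v, hv, hfv⟩⟩
  obtain ⟨c, hc, hfc⟩ := hs.intermediate_value hu hv hf ⟨hfu, hfv⟩
  exact hf0 c hc hfc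

theorem ConvexOn.mul_sub_le_sub_of_hasDerivWithinAt {S : Set ℝ} {f : ℝ → ℝ} {f' x y : ℝ}
    (hfc : ConvexOn ℝ S f) (hx : x ∈ S) (hy : y ∈ S) (hf' : HasDerivWithinAt f f' S x) :
    f' * (y - x) ≤ f y - f x := by
  rcases lt_trichotomy x y with hxy | rfl | hyx
  · have := hfc.le_slope_of_hasDerivWithinAt hx hy hxy hf'
    rwa [slope_def_field, le_div_iff₀ (sub_pos.2 hxy)] at this
  · simp
  · have := hfc.slope_le_of_hasDerivWithinAt hy hx hyx hf'
    rw [slope_def_field, div_le_iff₀ (sub_pos.2 hyx)] at this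
    linarith

section SecondDerivativeLowerBound

variable {D : Set ℝ} {f f' f'' : ℝ → ℝ} {M : ℝ}

theorem convexOn_sub_half_mul_sq_of_le_deriv2 (hD : Convex ℝ D)
    (hf : ∀ x ∈ D, HasDerivWithinAt f (f' x) D x) (hf' : ∀ x ∈ D, HasDerivWithinAt f' (f'' x) D x)
    (hM : ∀ x ∈ D, M ≤ f'' x) :
    ConvexOn ℝ D (fun t => f t - M / 2 * t ^ 2) := by
  refine convexOn_of_hasDerivWithinAt2_nonneg hD (f' := fun t => f' t - M * t)
    (f'' := fun t => f'' t - M) ?_ (fun x hx => ?_) (fun x hx => ?_) (fun x hx => ?_)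
  · exact fun x hx => ((hf x hx).continuousWithinAt).sub (by fun_prop)
  · have hsq := ((hasDerivWithinAt_id x D).pow 2).const_mul (M / 2)
    refine (((hf x (interior_subset hx)).sub hsq).mono interior_subset).congr_deriv ?_
    simp only [id]
    ring
  · have hlin := (hasDerivWithinAt_id x D).const_mul M
    exact (((hf' x (interior_subset hx)).sub hlin).mono interior_subset).congr_deriv (by simp)
  · exact sub_nonneg.2 (hM x (interior_subset hx))

theorem mul_sub_add_half_mul_sq_le_sub_of_le_deriv2 (hD : Convex ℝ D)
    (hf : ∀ x ∈ D, HasDerivWithinAt f (f' x) D x) (hf' : ∀ x ∈ D, HasDerivWithinAt f' (f'' x) D x)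
    (hM : ∀ x ∈ D, M ≤ f'' x) {x y : ℝ} (hx : x ∈ D) (hy : y ∈ D) :
    f' x * (y - x) + M / 2 * (y - x) ^ 2 ≤ f y - f x := by
  have hsq := ((hasDerivWithinAt_id x D).pow 2).const_mul (M / 2)
  have htangent := (convexOn_sub_half_mul_sq_of_le_deriv2 hD hf hf' hM
    ).mul_sub_le_sub_of_hasDerivWithinAt hx hy ((hf x hx).sub hsq)
  simp only [id] at htangent
  linear_combination htangent

theorem half_mul_sq_le_abs_sub_of_le_deriv2 (hD : Convex ℝ D)
    (hf : ∀ x ∈ D, HasDerivWithinAt f (f' x) D x) (hf' : ∀ x ∈ D, HasDerivWithinAt f' (f'' x) D x)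
    (hM : ∀ x ∈ D, M ≤ f'' x) (hsign : (∀ x ∈ D, 0 ≤ f' x) ∨ (∀ x ∈ D, f' x ≤ 0))
    {x y : ℝ} (hx : x ∈ D) (hy : y ∈ D) :
    M / 2 * (x - y) ^ 2 ≤ |f x - f y| := by
  have hxy := mul_sub_add_half_mul_sq_le_sub_of_le_deriv2 hD hf hf' hM hx hy
  have hyx := mul_sub_add_half_mul_sq_le_sub_of_le_deriv2 hD hf hf' hM hy hx
  have habs := abs_sub_comm (f x) (f y)
  rcases le_total x y with hle | hle <;> rcases hsign with hs | hs
  · nlinarith [mul_nonneg (hs x hx) (sub_nonneg.2 hle), le_abs_self (f y - f x)]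
  · nlinarith [mul_nonneg_of_nonpos_of_nonpos (hs y hy) (sub_nonpos.2 hle), le_abs_self (f x - f y)]
  · nlinarith [mul_nonneg (hs y hy) (sub_nonneg.2 hle), le_abs_self (f x - f y)]
  · nlinarith [mul_nonneg_of_nonpos_of_nonpos (hs x hx) (sub_nonpos.2 hle), le_abs_self (f y - f x)]

end SecondDerivativeLowerBound

theorem stmt0_general (a b : ℝ) (h h' h'' : ℝ → ℝ)
    (hd1 : ∀ x ∈ Icc a b, HasDerivWithinAt h (h' x) (Icc a b) x)
    (hd2 : ∀ x ∈ Icc a b, HasDerivWithinAt h' (h'' x) (Icc a b) x)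
    (hcont : ContinuousOn h'' (Icc a b))
    (hsign : (∀ x ∈ Icc a b, 0 ≤ h' x) ∨ (∀ x ∈ Icc a b, h' x ≤ 0))
    (hne : ∀ x ∈ Icc a b, h'' x ≠ 0) :
    ∀ x ∈ Icc a b, ∀ y ∈ Icc a b,
      (1/2) * sInf ((fun z => |h'' z|) '' Icc a b) * |x - y| ^ 2 ≤ |h x - h y| := by
  intro x hx y hy
  set M := sInf ((fun z => |h'' z|) '' Icc a b)
  have hM : ∀ z ∈ Icc a b, M ≤ |h'' z| := fun z hz =>
    csInf_le ⟨0, by rintro _ ⟨w, -, rfl⟩; exact abs_nonneg _⟩ (mem_image_of_mem _ hz)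
  rw [sq_abs, one_div_mul_eq_div]
  rcases isPreconnected_Icc.forall_pos_or_forall_neg hcont hne with hpos | hneg
  · exact half_mul_sq_le_abs_sub_of_le_deriv2 (convex_Icc a b) hd1 hd2
      (fun z hz => (hM z hz).trans_eq (abs_of_pos (hpos z hz))) hsign hx hy
  · have hbound := half_mul_sq_le_abs_sub_of_le_deriv2 (convex_Icc a b) (f := fun t => -h t)
      (fun z hz => (hd1 z hz).neg) (fun z hz => (hd2 z hz).neg)
      (fun z hz => (hM z hz).trans_eq (abs_of_neg (hneg z hz))) (by simpa [or_comm] using hsign)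
      hx hy
    rwa [neg_sub_neg, abs_sub_comm] at hbound

theorem stmt0 (a b : ℝ) (hab : a < b) (h h' h'' : ℝ → ℝ)
    (hd1 : ∀ x ∈ Icc a b, HasDerivWithinAt h (h' x) (Icc a b) x)
    (hd2 : ∀ x ∈ Icc a b, HasDerivWithinAt h' (h'' x) (Icc a b) x)
    (hcont : ContinuousOn h'' (Icc a b))
    (hsign : (∀ x ∈ Icc a b, 0 ≤ h' x) ∨ (∀ x ∈ Icc a b, h' x ≤ 0))
    (hne : ∀ x ∈ Icc a b, h'' x ≠ 0) :
    ∀ x ∈ Icc a b, ∀ y ∈ Icc a b,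
      (1/2) * sInf ((fun z => |h'' z|) '' Icc a b) * |x - y| ^ 2 ≤ |h x - h y| :=
  stmt0_general a b h h' h'' hd1 hd2 hcont hsign hne
end

section
/- Let f be a C² function on a closed interval [a,b] with f' > 0 on (a,b), f''(a) > 0, and f''(b) < 0. Then there exists r > 0 such that any C² function g on [a,b] with ‖g - f‖_{C²} ≤ r, g'(a) ≥ 0 and g'(b) ≥ 0 satisfies g' > 0 on (a,b) (hence g is strictly increasing on (a,b)). -/
/-! Near `a` the second derivative of `f` is bounded below by a positive constant, near `b` it
is bounded above by a negative one, and on the compact middle part `f'` is bounded below by a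
positive constant. A `C²`-perturbation smaller than all three margins keeps these signs, so `g'`
increases away from `g' a ≥ 0`, decreases towards `g' b ≥ 0`, and stays positive in between. -/

open Set

section DerivSign

variable {φ φ' : ℝ → ℝ} {a b x : ℝ}

theorem lt_of_hasDerivWithinAt_Icc_of_pos
    (hφ : ∀ y ∈ Icc a b, HasDerivWithinAt φ (φ' y) (Icc a b) y) (hx : x ∈ Ioc a b)
    (hpos : ∀ y ∈ Ioo a x, 0 < φ' y) : φ a < φ x := by
  have hsub : Icc a x ⊆ Icc a b := Icc_subset_Icc_right hx.2
  have hmono : StrictMonoOn φ (Icc a x) := by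
    refine strictMonoOn_of_hasDerivWithinAt_pos (f' := φ') (convex_Icc a x)
      (fun y hy => ((hφ y (hsub hy)).continuousWithinAt).mono hsub) ?_ ?_
    · rw [interior_Icc]
      exact fun y hy => ((hφ y (Ioo_subset_Icc_self (Ioo_subset_Ioo_right hx.2 hy))).hasDerivAt
        (Icc_mem_nhds hy.1 (hy.2.trans_le hx.2))).hasDerivWithinAt
    · rwa [interior_Icc]
  exact hmono (left_mem_Icc.2 hx.1.le) (right_mem_Icc.2 hx.1.le) hx.1

theorem lt_of_hasDerivWithinAt_Icc_of_neg
    (hφ : ∀ y ∈ Icc a b, HasDerivWithinAt φ (φ' y) (Icc a b) y) (hx : x ∈ Ico a b)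
    (hneg : ∀ y ∈ Ioo x b, φ' y < 0) : φ b < φ x := by
  have hsub : Icc x b ⊆ Icc a b := Icc_subset_Icc_left hx.1
  have hanti : StrictAntiOn φ (Icc x b) := by
    refine strictAntiOn_of_hasDerivWithinAt_neg (f' := φ') (convex_Icc x b)
      (fun y hy => ((hφ y (hsub hy)).continuousWithinAt).mono hsub) ?_ ?_
    · rw [interior_Icc]
      exact fun y hy => ((hφ y (Ioo_subset_Icc_self (Ioo_subset_Ioo_left hx.1 hy))).hasDerivAt
        (Icc_mem_nhds (hx.1.trans_lt hy.1) hy.2)).hasDerivWithinAt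
    · rwa [interior_Icc]
  exact hanti (left_mem_Icc.2 hx.2.le) (right_mem_Icc.2 hx.2.le) hx.2

theorem pos_of_mem_Ioo_of_deriv_signs {c d : ℝ}
    (hφ : ∀ y ∈ Icc a b, HasDerivWithinAt φ (φ' y) (Icc a b) y)
    (ha : 0 ≤ φ a) (hb : 0 ≤ φ b) (hleft : ∀ y ∈ Ioo a c, 0 < φ' y)
    (hmid : ∀ y ∈ Icc c d, 0 < φ y) (hright : ∀ y ∈ Ioo d b, φ' y < 0)
    (hx : x ∈ Ioo a b) : 0 < φ x := by
  rcases lt_or_ge x c with hxc | hcx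
  · have := lt_of_hasDerivWithinAt_Icc_of_pos hφ (Ioo_subset_Ioc_self hx)
      fun y hy => hleft y ⟨hy.1, hy.2.trans hxc⟩
    linarith
  rcases le_or_gt x d with hxd | hdx
  · exact hmid x ⟨hcx, hxd⟩
  · have := lt_of_hasDerivWithinAt_Icc_of_neg hφ (Ioo_subset_Ico_self hx)
      fun y hy => hright y ⟨hdx.trans hy.1, hy.2⟩
    linarith

end DerivSign

theorem exists_margins_of_pos_of_endpoint_signs {u v : ℝ → ℝ} {a b : ℝ} (hab : a < b)
    (hu : ContinuousOn u (Icc a b)) (hupos : ∀ x ∈ Ioo a b, 0 < u x)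
    (hva : ContinuousWithinAt v (Icc a b) a) (hvb : ContinuousWithinAt v (Icc a b) b)
    (ha : 0 < v a) (hb : v b < 0) :
    ∃ c d ε, a < c ∧ c ≤ d ∧ d < b ∧ 0 < ε ∧ (∀ y ∈ Ico a c, ε < v y) ∧
      (∀ y ∈ Icc c d, ε < u y) ∧ (∀ y ∈ Ioc d b, v y < -ε) := by
  obtain ⟨c₀, hc₀, hvc₀⟩ : ∃ c₀ ∈ Ioi a, Ico a c₀ ⊆ v ⁻¹' Ioi (v a / 2) :=
    mem_nhdsGE_iff_exists_Ico_subset.1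
      ((continuousWithinAt_Icc_iff_Ici hab).1 hva (Ioi_mem_nhds (half_lt_self ha)))
  obtain ⟨d₀, hd₀, hvd₀⟩ : ∃ d₀ ∈ Iio b, Ioc d₀ b ⊆ v ⁻¹' Iio (v b / 2) :=
    mem_nhdsLE_iff_exists_Ioc_subset.1
      ((continuousWithinAt_Icc_iff_Iic hab).1 hvb (Iio_mem_nhds (by linarith)))
  set c := min c₀ ((a + b) / 2)
  set d := max d₀ ((a + b) / 2)
  have hac : a < c := lt_min hc₀ (by linarith)
  have hcd : c ≤ d := (min_le_right _ _).trans (le_max_right _ _)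
  have hdb : d < b := max_lt hd₀ (by linarith)
  have hmid : Icc c d ⊆ Ioo a b := Icc_subset_Ioo hac hdb
  obtain ⟨x₀, hx₀, hmin⟩ := isCompact_Icc.exists_isMinOn (nonempty_Icc.2 hcd)
    (hu.mono (hmid.trans Ioo_subset_Icc_self))
  have hm : 0 < u x₀ := hupos x₀ (hmid hx₀)
  set ε := min (min (v a / 2) (-v b / 2)) (u x₀ / 2)
  have hεa : ε ≤ v a / 2 := (min_le_left _ _).trans (min_le_left _ _)
  have hεb : ε ≤ -v b / 2 := (min_le_left _ _).trans (min_le_right _ _)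
  have hεm : ε ≤ u x₀ / 2 := min_le_right _ _
  refine ⟨c, d, ε, hac, hcd, hdb, lt_min (lt_min (by linarith) (by linarith)) (by linarith),
    fun y hy => ?_, fun y hy => ?_, fun y hy => ?_⟩
  · have : v a / 2 < v y := hvc₀ (Ico_subset_Ico_right (min_le_left _ _) hy)
    linarith
  · have : u x₀ ≤ u y := hmin hy
    linarith
  · have : v y < v b / 2 := hvd₀ (Ioc_subset_Ioc_left (le_max_left _ _) hy)
    linarith

theorem stmt2_general (a b : ℝ) (hab : a < b) (f f' f'' : ℝ → ℝ)
    (hf2 : ∀ x ∈ Icc a b, HasDerivWithinAt f' (f'' x) (Icc a b) x)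
    (hf''c : ContinuousOn f'' (Icc a b))
    (hpos : ∀ x ∈ Ioo a b, 0 < f' x)
    (ha : 0 < f'' a) (hb : f'' b < 0) :
    ∃ r > (0:ℝ), ∀ g g' g'' : ℝ → ℝ,
      (∀ x ∈ Icc a b, HasDerivWithinAt g (g' x) (Icc a b) x) →
      (∀ x ∈ Icc a b, HasDerivWithinAt g' (g'' x) (Icc a b) x) →
      ContinuousOn g'' (Icc a b) →
      (∀ x ∈ Icc a b, |g x - f x| + |g' x - f' x| + |g'' x - f'' x| ≤ r) →
      0 ≤ g' a → 0 ≤ g' b →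
      ∀ x ∈ Ioo a b, 0 < g' x := by
  obtain ⟨c, d, ε, hac, hcd, hdb, hε, hleft, hmid, hright⟩ :=
    exists_margins_of_pos_of_endpoint_signs hab (fun x hx => (hf2 x hx).continuousWithinAt) hpos
      (hf''c a (left_mem_Icc.2 hab.le)) (hf''c b (right_mem_Icc.2 hab.le)) ha hb
  refine ⟨ε, hε, fun g g' g'' _ hg2 _ hclose hga hgb => ?_⟩
  have hclose_deriv : ∀ y ∈ Icc a b, |g' y - f' y| ≤ ε ∧ |g'' y - f'' y| ≤ ε := by
    intro y hy
    have := hclose y hy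
    constructor <;> linarith [abs_nonneg (g y - f y), abs_nonneg (g' y - f' y),
      abs_nonneg (g'' y - f'' y)]
  intro x hx
  refine pos_of_mem_Ioo_of_deriv_signs (c := c) (d := d) hg2 hga hgb ?_ ?_ ?_ hx
  · intro y hy
    have := abs_le.1 (hclose_deriv y ⟨hy.1.le, by linarith [hy.2]⟩).2
    linarith [hleft y (Ioo_subset_Ico_self hy)]
  · intro y hy
    have := abs_le.1 (hclose_deriv y ⟨by linarith [hy.1], by linarith [hy.2]⟩).1
    linarith [hmid y hy]
  · intro y hy
    have := abs_le.1 (hclose_deriv y ⟨by linarith [hy.1], hy.2.le⟩).2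
    linarith [hright y (Ioo_subset_Ioc_self hy)]

theorem stmt2 (a b : ℝ) (hab : a < b) (f f' f'' : ℝ → ℝ)
    (hf1 : ∀ x ∈ Icc a b, HasDerivWithinAt f (f' x) (Icc a b) x)
    (hf2 : ∀ x ∈ Icc a b, HasDerivWithinAt f' (f'' x) (Icc a b) x)
    (hf''c : ContinuousOn f'' (Icc a b))
    (hpos : ∀ x ∈ Ioo a b, 0 < f' x)
    (ha : 0 < f'' a) (hb : f'' b < 0) :
    ∃ r > (0:ℝ), ∀ g g' g'' : ℝ → ℝ,
      (∀ x ∈ Icc a b, HasDerivWithinAt g (g' x) (Icc a b) x) →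
      (∀ x ∈ Icc a b, HasDerivWithinAt g' (g'' x) (Icc a b) x) →
      ContinuousOn g'' (Icc a b) →
      (∀ x ∈ Icc a b, |g x - f x| + |g' x - f' x| + |g'' x - f'' x| ≤ r) →
      0 ≤ g' a → 0 ≤ g' b →
      ∀ x ∈ Ioo a b, 0 < g' x :=
  stmt2_general a b hab f f' f'' hf2 hf''c hpos ha hb
end

section
/- Suppose p : (0,∞) → ℝ is continuously differentiable with p'(ξ) > 0 for all ξ > 0 and lim_{ξ→0⁺} ξ³p'(ξ) = 0. Then lim_{ξ→0⁺} ξ²p(ξ) = 0. -/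
/-!
Integrating `|p'(t)| ≤ ε / t³` from `ξ` to a fixed small `a` gives `ξ² |p(a) - p(ξ)| ≤ ε / 2`,
while `ξ² p(a) → 0`; hence `ξ² p(ξ)` is eventually within `ε` of `0`.
-/

open Set Filter Topology

theorem sq_mul_norm_sub_le_of_norm_deriv_le_div_cube {E : Type*} [NormedAddCommGroup E]
    [NormedSpace ℝ E] {f f' : ℝ → E} {C ξ a : ℝ} (hξ : 0 < ξ) (hξa : ξ ≤ a)
    (hd : ∀ t ∈ Icc ξ a, HasDerivAt f (f' t) t) (hbound : ∀ t ∈ Icc ξ a, ‖f' t‖ ≤ C / t ^ 3) :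
    ξ ^ 2 * ‖f a - f ξ‖ ≤ C / 2 := by
  have hC : 0 ≤ C := by
    by_contra! hC
    linarith [norm_nonneg (f' ξ), hbound ξ ⟨le_rfl, hξa⟩, div_neg_of_neg_of_pos hC (pow_pos hξ 3)]
  -- `B` is the primitive of `t ↦ C / t ^ 3` vanishing at `ξ`
  set B : ℝ → ℝ := fun t => C / 2 * ((ξ ^ 2)⁻¹ - (t ^ 2)⁻¹)
  have hB : ∀ t ∈ Icc ξ a, HasDerivAt B (C / t ^ 3) t := by
    intro t ht
    have ht0 : t ≠ 0 := (hξ.trans_le ht.1).ne'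
    refine (((hasDerivAt_pow 2 t).inv (pow_ne_zero 2 ht0)).const_sub _ |>.const_mul _)
      |>.congr_deriv ?_
    field_simp
    ring
  have key := image_norm_le_of_norm_deriv_right_le_deriv_boundary'
    (f := fun t => f t - f ξ) (B := B) (B' := fun t => C / t ^ 3)
    (fun t ht => ((hd t ht).sub_const (f ξ)).continuousAt.continuousWithinAt)
    (fun t ht => ((hd t (Ico_subset_Icc_self ht)).sub_const (f ξ)).hasDerivWithinAt)
    (by simp [B]) (fun t ht => (hB t ht).continuousAt.continuousWithinAt)
    (fun t ht => (hB t (Ico_subset_Icc_self ht)).hasDerivWithinAt)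
    (fun t ht => hbound t (Ico_subset_Icc_self ht)) ⟨hξa, le_rfl⟩
  calc ξ ^ 2 * ‖f a - f ξ‖ ≤ ξ ^ 2 * (C / 2 * ((ξ ^ 2)⁻¹ - (a ^ 2)⁻¹)) :=
        mul_le_mul_of_nonneg_left key (by positivity)
    _ ≤ ξ ^ 2 * (C / 2 * (ξ ^ 2)⁻¹) := by gcongr; exact sub_le_self _ (by positivity)
    _ = C / 2 := by field_simp

theorem stmt6_general (p p' : ℝ → ℝ)
    (hd : ∀ ξ ∈ Ioi (0:ℝ), HasDerivAt p (p' ξ) ξ)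
    (hlim : Tendsto (fun ξ => ξ ^ 3 * p' ξ) (nhdsWithin 0 (Ioi 0)) (nhds 0)) :
    Tendsto (fun ξ => ξ ^ 2 * p ξ) (nhdsWithin 0 (Ioi 0)) (nhds 0) := by
  rw [Metric.tendsto_nhds] at hlim ⊢
  intro ε hε
  obtain ⟨a, ha, hcube⟩ := mem_nhdsGT_iff_exists_Ioc_subset.mp (hlim ε hε)
  have hderiv : ∀ t ∈ Ioc 0 a, |p' t| ≤ ε / t ^ 3 := fun t ht => by
    have := hcube ht
    simp only [mem_ofPred_eq, dist_zero_right, norm_mul, norm_pow, Real.norm_eq_abs,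
      abs_of_pos ht.1] at this
    rw [le_div_iff₀ (pow_pos ht.1 3)]
    linarith
  have hsmall : ∀ᶠ ξ in 𝓝[>] 0, ξ ^ 2 * |p a| < ε / 2 := by
    refine Tendsto.eventually_lt_const (half_pos hε) ?_
    have : Continuous fun ξ : ℝ => ξ ^ 2 * |p a| := by fun_prop
    simpa using (this.tendsto 0).mono_left nhdsWithin_le_nhds
  filter_upwards [hsmall, Ioo_mem_nhdsGT ha] with ξ hξ hξa
  have hdiff : ξ ^ 2 * |p a - p ξ| ≤ ε / 2 :=
    sq_mul_norm_sub_le_of_norm_deriv_le_div_cube hξa.1 hξa.2.le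
      (fun t ht => hd t (hξa.1.trans_le ht.1))
      (fun t ht => hderiv t ⟨hξa.1.trans_le ht.1, ht.2⟩)
  rw [dist_zero_right, Real.norm_eq_abs, abs_mul, abs_of_pos (pow_pos hξa.1 2)]
  calc ξ ^ 2 * |p ξ| ≤ ξ ^ 2 * (|p a| + |p a - p ξ|) := by
        gcongr; simpa using abs_sub (p a) (p a - p ξ)
    _ ≤ ξ ^ 2 * |p a| + ε / 2 := by rw [mul_add]; gcongr
    _ < ε := by linarith

theorem stmt6 (p p' : ℝ → ℝ)
    (hd : ∀ ξ ∈ Ioi (0:ℝ), HasDerivAt p (p' ξ) ξ)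
    (hc : ContinuousOn p' (Ioi 0))
    (hpos : ∀ ξ ∈ Ioi (0:ℝ), 0 < p' ξ)
    (hlim : Tendsto (fun ξ => ξ ^ 3 * p' ξ) (nhdsWithin 0 (Ioi 0)) (nhds 0)) :
    Tendsto (fun ξ => ξ ^ 2 * p ξ) (nhdsWithin 0 (Ioi 0)) (nhds 0) :=
  stmt6_general p p' hd hlim
end

section
/- Let λ > 0, L > 0, and G_λ(x) = cosh(√λ(x - L⌊x/L⌋ - L/2))/(2√λ sinh(√λ L/2)). For every x ∈ (-L/2, 0): G_λ(x−y) − G_λ(x+y) > 0 for all y ∈ (−L/2, 0), and G_λ(x−y) − G_λ(x+y) = 0 for y ∈ {−L/2, 0}. -/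
/-!
For `|u| < L` the kernel equals `cosh (√λ (L/2 - |u|)) / D`, and `L/2 - |u|` is `L/2` minus the
distance from `u` to `Lℤ`; so `G` is a strictly decreasing function of that distance. For
`x, y ∈ (-L/2, 0)` the point `x - y` is strictly closer to `Lℤ` than `x + y`, while for
`y = -L/2` the points `x ± L/2` are mirror images about `-L/2`.
-/

open Real Set

lemma cosh_mul_sub_floor_eq (s : ℝ) {L x : ℝ} (hL : 0 < L) (hx : |x| < L) :
    cosh (s * (x - L * ⌊x / L⌋ - L / 2)) = cosh (s * (L / 2 - |x|)) := by
  rcases le_or_gt 0 x with hx0 | hx0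
  · have hfloor : ⌊x / L⌋ = 0 :=
      Int.floor_eq_zero_iff.mpr
        ⟨by positivity, (div_lt_one hL).mpr ((le_abs_self x).trans_lt hx)⟩
    rw [hfloor, abs_of_nonneg hx0, ← cosh_neg]
    ring_nf
  · have hfloor : ⌊x / L⌋ = -1 := by
      rw [Int.floor_eq_iff, abs_of_neg hx0] at *
      push_cast
      exact ⟨(le_div_iff₀ hL).mpr (by linarith), by linarith [div_neg_of_neg_of_pos hx0 hL]⟩
    rw [hfloor, abs_of_neg hx0]
    push_cast
    ring_nf

lemma cosh_mul_lt_cosh_mul_iff {s : ℝ} (hs : 0 < s) {a b : ℝ} :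
    cosh (s * a) < cosh (s * b) ↔ |a| < |b| := by
  rw [cosh_lt_cosh, abs_mul, abs_mul, abs_of_pos hs, mul_lt_mul_iff_right₀ hs]

lemma abs_half_sub_abs_add_lt_abs_half_sub_abs_sub {L x y : ℝ} (hx : x ∈ Ioo (-(L / 2)) 0)
    (hy : y ∈ Ioo (-(L / 2)) 0) :
    |(L / 2 - |x + y|)| < |(L / 2 - |x - y|)| := by
  obtain ⟨hx₁, hx₂⟩ := id hx
  obtain ⟨hy₁, hy₂⟩ := hy
  rw [abs_of_neg (by linarith : x + y < 0), abs_lt,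
    abs_of_nonneg (by cases abs_cases (x - y) <;> linarith : 0 ≤ L / 2 - |x - y|)]
  constructor <;> cases abs_cases (x - y) <;> linarith

theorem stmt10 (l L : ℝ) (hl : 0 < l) (hL : 0 < L) :
    let G : ℝ → ℝ := fun x =>
      Real.cosh (Real.sqrt l * (x - L * (⌊x / L⌋ : ℝ) - L / 2)) /
        (2 * Real.sqrt l * Real.sinh (Real.sqrt l * L / 2))
    ∀ x ∈ Ioo (-(L / 2)) (0:ℝ),
      (∀ y ∈ Ioo (-(L / 2)) (0:ℝ), 0 < G (x - y) - G (x + y)) ∧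
      (∀ y : ℝ, y = -(L / 2) ∨ y = 0 → G (x - y) - G (x + y) = 0) := by
  intro G x hx
  have hs : 0 < √l := sqrt_pos.mpr hl
  have hD : 0 < 2 * √l * sinh (√l * L / 2) := by
    have : 0 < sinh (√l * L / 2) := sinh_pos_iff.mpr (by positivity)
    positivity
  have hG : ∀ u, -L < u → u < L →
      G u = cosh (√l * (L / 2 - |u|)) / (2 * √l * sinh (√l * L / 2)) :=
    fun u hu₁ hu₂ => by simp only [G, cosh_mul_sub_floor_eq _ hL (abs_lt.mpr ⟨hu₁, hu₂⟩)]
  obtain ⟨hx₁, hx₂⟩ := id hx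
  refine ⟨fun y hy => ?_, ?_⟩
  · obtain ⟨hy₁, hy₂⟩ := id hy
    rw [hG (x - y) (by linarith) (by linarith), hG (x + y) (by linarith) (by linarith),
      sub_pos, div_lt_div_iff_of_pos_right hD, cosh_mul_lt_cosh_mul_iff hs]
    exact abs_half_sub_abs_add_lt_abs_half_sub_abs_sub hx hy
  · rintro y (rfl | rfl)
    · rw [hG _ (by linarith) (by linarith), hG _ (by linarith) (by linarith),
        abs_of_pos (by linarith : 0 < x - -(L / 2)), abs_of_neg (by linarith : x + -(L / 2) < 0),
        ← cosh_neg]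
      ring_nf
    · simp
end

section
/- Let λ > 0 and h : ℝ → ℝ be continuous, L-periodic, even, non-constant, and non-decreasing on (−L/2, 0). Then the function φ = G_λ * h (periodic convolution) satisfies φ'(x) > 0 for every x ∈ (−L/2, 0). -/
open Set Filter MeasureTheory Topology Function
open scoped Interval

/-!
Differentiating under the integral and using that `G_λ'` is odd and `L`-periodic gives
`φ'(x) = ∫_{-L/2}^0 G_λ'(u) (h(x - u) - h(x + u)) du`. On `(-L/2, 0)` the kernel `G_λ'` is
positive, and `h(x + u) ≤ h(x - u)` since `x + u` is farther from `Lℤ` than `x - u`. If equality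
held for every `u`, then `h` would be symmetric about `x` as well as about `0`, hence
`2x`-periodic; a period in `(0, L)` together with monotonicity on `[-L/2, 0]` makes `h` constant.
-/

theorem MonotoneOn.closure_of_continuous {α β : Type*} [LinearOrder α] [TopologicalSpace α]
    [OrderClosedTopology α] [Preorder β] [TopologicalSpace β] [OrderClosedTopology β]
    {f : α → β} {s : Set α} (hf : Continuous f) (hmono : MonotoneOn f s) :
    MonotoneOn f (closure s) := by
  intro a ha b hb hab
  obtain rfl | hlt := hab.eq_or_lt
  · rfl
  have hmem : (a, b) ∈ closure ({p : α × α | p.1 < p.2} ∩ s ×ˢ s) :=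
    (isOpen_lt continuous_fst continuous_snd).inter_closure
      ⟨hlt, by rw [closure_prod_eq]; exact ⟨ha, hb⟩⟩
  exact closure_minimal (fun p hp => hmono hp.2.1 hp.2.2 hp.1.le)
    (isClosed_le (hf.comp continuous_fst) (hf.comp continuous_snd)) hmem

section Deriv

variable {𝕜 F : Type*} [NontriviallyNormedField 𝕜] [NormedAddCommGroup F] [NormedSpace 𝕜 F]
  {f : 𝕜 → F}

theorem Function.Periodic.deriv {c : 𝕜} (hf : Periodic f c) : Periodic (deriv f) c := fun x => by
  rw [← deriv_comp_add_const, funext hf]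

theorem Function.Even.deriv (hf : f.Even) : (deriv f).Odd := fun x => by
  have := deriv_comp_neg f (-x)
  rwa [funext hf, neg_neg] at this

end Deriv

theorem hasDerivAt_intervalIntegral_sub_mul {K h : ℝ → ℝ} {C : NNReal} {a b : ℝ}
    (hK : LipschitzWith C K) (hh : IntervalIntegrable h volume a b) (x : ℝ) :
    HasDerivAt (fun x => ∫ y in a..b, K (x - y) * h y)
      (∫ y in a..b, deriv K (x - y) * h y) x := by
  have hmeas : ∀ x, AEStronglyMeasurable (fun y => K (x - y) * h y) (volume.restrict (Ι a b)) :=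
    fun x => (hK.continuous.comp (continuous_sub_left x)).aestronglyMeasurable.mul
      hh.def'.aestronglyMeasurable
  refine (intervalIntegral.hasDerivAt_integral_of_dominated_loc_of_lip (bound := fun y => C * |h y|)
    univ_mem (Eventually.of_forall hmeas) ?_ ?_ ?_ ?_ ?_).2
  · exact hh.continuousOn_mul (hK.continuous.comp (continuous_sub_left x)).continuousOn
  · exact ((measurable_deriv K).comp (measurable_const.sub measurable_id)).aestronglyMeasurable.mul
      hh.def'.aestronglyMeasurable
  · refine ae_of_all _ fun y _ => LipschitzOnWith.of_dist_le_mul fun x₁ _ x₂ _ => ?_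
    have hKd : |K (x₁ - y) - K (x₂ - y)| ≤ C * |x₁ - x₂| := by
      simpa [Real.dist_eq] using hK.dist_le_mul (x₁ - y) (x₂ - y)
    rw [Real.dist_eq, Real.dist_eq, ← sub_mul, abs_mul, Real.coe_nnabs,
      abs_of_nonneg (by positivity : (0 : ℝ) ≤ C * |h y|)]
    calc _ ≤ C * |x₁ - x₂| * |h y| := by gcongr
      _ = _ := by ring
  · exact hh.abs.const_mul _
  · filter_upwards [(volume.measurePreserving_sub_left x).quasiMeasurePreserving.ae
      hK.ae_differentiableAt_real] with y hy _
    exact (hy.hasDerivAt.comp_sub_const x y).mul_const (h y)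

theorem intervalIntegral_sub_mul_eq_of_odd {k h : ℝ → ℝ} {L : ℝ} (hk : Periodic k L)
    (hodd : k.Odd) (hh : Periodic h L) (hki : ∀ a b, IntervalIntegrable k volume a b)
    (hhc : Continuous h) (x : ℝ) :
    ∫ y in -(L / 2)..L / 2, k (x - y) * h y =
      ∫ u in -(L / 2)..0, k u * (h (x - u) - h (x + u)) := by
  set f := fun u => k u * h (x - u)
  have hfi : ∀ a b, IntervalIntegrable f volume a b := fun a b =>
    (hki a b).mul_continuousOn (hhc.comp (continuous_sub_left x)).continuousOn
  have hgi : IntervalIntegrable (fun u => k u * h (x + u)) volume (-(L / 2)) 0 :=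
    (hki _ _).mul_continuousOn (hhc.comp (continuous_const_add x)).continuousOn
  have hf : Periodic f L := fun u => by
    simp only [f, hk u, sub_add_eq_sub_sub, hh.sub_eq]
  have hreflect : ∫ u in 0..L / 2, f u = -∫ u in -(L / 2)..0, k u * h (x + u) := by
    rw [← intervalIntegral.integral_neg, ← neg_zero, ← neg_neg (L / 2),
      ← intervalIntegral.integral_comp_neg]
    simp only [f, hodd _, sub_neg_eq_add, neg_mul, neg_neg, neg_zero]
  calc ∫ y in -(L / 2)..L / 2, k (x - y) * h y
      = ∫ u in -(L / 2)..-(L / 2) + L, f u := by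
        rw [show (∫ y in -(L / 2)..L / 2, k (x - y) * h y) = ∫ y in -(L / 2)..L / 2, f (x - y) by
          simp only [f, sub_sub_cancel], intervalIntegral.integral_comp_sub_left f x,
          ← hf.intervalIntegral_add_eq (x - L / 2)]
        ring_nf
    _ = (∫ u in -(L / 2)..0, f u) - ∫ u in -(L / 2)..0, k u * h (x + u) := by
        rw [← intervalIntegral.integral_add_adjacent_intervals (hfi _ 0) (hfi 0 _),
          show -(L / 2) + L = L / 2 by ring, hreflect, sub_eq_add_neg]
    _ = ∫ u in -(L / 2)..0, k u * (h (x - u) - h (x + u)) := by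
        rw [← intervalIntegral.integral_sub (hfi _ _) hgi]
        simp only [f, mul_sub]

section EvenPeriodic

variable {h : ℝ → ℝ} {L : ℝ}

theorem apply_add_le_apply_sub (heven : h.Even) (hper : Periodic h L)
    (hmono : MonotoneOn h (Icc (-(L / 2)) 0)) {x u : ℝ} (hx : x ∈ Icc (-(L / 2)) 0)
    (hu : u ∈ Icc (-(L / 2)) 0) : h (x + u) ≤ h (x - u) := by
  obtain ⟨hx₁, hx₂⟩ := hx
  obtain ⟨hu₁, hu₂⟩ := hu
  have hsub : h (x - u) = h (-|x - u|) := by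
    rcases abs_choice (x - u) with habs | habs <;> rw [habs]
    · rw [heven]
    · rw [neg_neg]
  have hsub_mem : -|x - u| ∈ Icc (-(L / 2)) 0 :=
    ⟨by rw [neg_le_neg_iff, abs_le]; constructor <;> linarith, by simp⟩
  rw [hsub]
  rcases le_or_gt (-(L / 2)) (x + u) with hle | hlt
  · exact hmono ⟨hle, by linarith⟩ hsub_mem (by rw [le_neg, abs_le]; constructor <;> linarith)
  · rw [← hper, ← heven]
    exact hmono ⟨by linarith, by linarith⟩ hsub_mem
      (by rw [neg_le_neg_iff, abs_le]; constructor <;> linarith)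

theorem periodic_two_mul_of_apply_add_eq_apply_sub (hL : 0 < L) (heven : h.Even)
    (hper : Periodic h L) {x : ℝ} (hsymm : ∀ u ∈ Ioo (-(L / 2)) 0, h (x + u) = h (x - u)) :
    Periodic h (2 * x) := by
  have hdiff : Periodic (fun v => h (x + v) - h (x - v)) L := fun v => by
    simp only [← add_assoc, hper _, sub_add_eq_sub_sub, hper.sub_eq]
  have hsymm' : ∀ v, h (x + v) = h (x - v) := by
    intro v
    obtain ⟨w, ⟨hw₁, hw₂⟩, hvw⟩ := hdiff.exists_mem_Ico hL v (-(L / 2))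
    rw [← sub_eq_zero, hvw, sub_eq_zero]
    rcases hw₁.eq_or_lt with rfl | hw₁
    · rw [← hper, sub_neg_eq_add]; ring_nf
    rcases lt_trichotomy w 0 with hw | rfl | hw
    · exact hsymm w ⟨hw₁, hw⟩
    · simp
    · simpa [sub_eq_add_neg] using (hsymm (-w) ⟨by linarith, by linarith⟩).symm
  intro y
  rw [show y + 2 * x = x + (x + y) by ring, hsymm', sub_add_cancel_left, heven]

theorem apply_eq_apply_zero_of_periodic_of_monotoneOn {p : ℝ} (hper : Periodic h L)
    (hp : Periodic h p) (hp₀ : 0 < p) (hpL : p < L) (hmono : MonotoneOn h (Icc (-(L / 2)) 0))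
    (y : ℝ) : h y = h 0 := by
  obtain ⟨q, hq, hq₀, hqL⟩ : ∃ q, Periodic h q ∧ 0 < q ∧ q ≤ L / 2 := by
    rcases le_total p (L / 2) with hle | hle
    · exact ⟨p, hp, hp₀, hle⟩
    · exact ⟨L - p, hper.sub_period hp, by linarith, by linarith⟩
  have hconst : ∀ w ∈ Icc (-q) 0, h w = h 0 := fun w hw =>
    le_antisymm (hmono ⟨by linarith [hw.1], hw.2⟩ ⟨by linarith, le_rfl⟩ hw.2)
      (by rw [← neg_add_cancel q, hq]
          exact hmono ⟨by linarith, by linarith⟩ ⟨by linarith [hw.1], hw.2⟩ hw.1)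
  obtain ⟨w, hw, hyw⟩ := hq.exists_mem_Ico hq₀ y (-q)
  rw [hyw, hconst w ⟨hw.1, by linarith [hw.2]⟩]

theorem exists_apply_add_lt_apply_sub (hL : 0 < L) (heven : h.Even) (hper : Periodic h L)
    (hmono : MonotoneOn h (Icc (-(L / 2)) 0)) (hnc : ∃ a b, h a ≠ h b) {x : ℝ}
    (hx : x ∈ Ioo (-(L / 2)) 0) : ∃ u ∈ Ioo (-(L / 2)) 0, h (x + u) < h (x - u) := by
  by_contra! hge
  have hsymm : Periodic h (2 * x) := periodic_two_mul_of_apply_add_eq_apply_sub hL heven hper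
    fun u hu => (apply_add_le_apply_sub heven hper hmono (Ioo_subset_Icc_self hx)
      (Ioo_subset_Icc_self hu)).antisymm (hge u hu)
  have hconst := apply_eq_apply_zero_of_periodic_of_monotoneOn hper hsymm.neg
    (by linarith [hx.2]) (by linarith [hx.1]) hmono
  obtain ⟨a, b, hab⟩ := hnc
  exact hab ((hconst a).trans (hconst b).symm)

end EvenPeriodic

/-- `‖(z : AddCircle L)‖` is the distance from `z` to `Lℤ`; with `s = √λ` this is the kernel
`G_λ` of the statement, see `greenKernel.eq_cosh_floor`. -/
noncomputable def greenKernel (s L z : ℝ) : ℝ :=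
  Real.cosh (s * (‖(z : AddCircle L)‖ - L / 2)) / (2 * s * Real.sinh (s * L / 2))

namespace greenKernel

variable {s L : ℝ}

theorem periodic : Periodic (greenKernel s L) L := fun z => by
  simp [greenKernel]

theorem even : (greenKernel s L).Even := fun z => by
  simp [greenKernel]

theorem eq_of_abs_le (hL : 0 < L) {z : ℝ} (hz : |z| ≤ L / 2) :
    greenKernel s L z = Real.cosh (s * (|z| - L / 2)) / (2 * s * Real.sinh (s * L / 2)) := by
  rw [greenKernel, (AddCircle.norm_coe_eq_abs_iff L hL.ne').2 (by rwa [abs_of_pos hL])]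

theorem eq_cosh_floor (hL : 0 < L) (z : ℝ) :
    Real.cosh (s * (z - L * ⌊z / L⌋ - L / 2)) / (2 * s * Real.sinh (s * L / 2)) =
      greenKernel s L z := by
  set r := z - L * ⌊z / L⌋
  have hr : r ∈ Ico 0 L := by
    have h1 := Int.floor_le (z / L)
    have h2 := Int.lt_floor_add_one (z / L)
    rw [le_div_iff₀ hL] at h1
    rw [div_lt_iff₀ hL] at h2
    constructor <;> nlinarith
  rw [show greenKernel s L z = greenKernel s L r by
    simpa [r, mul_comm] using (periodic.sub_int_mul_eq (⌊z / L⌋)).symm]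
  rcases le_or_gt r (L / 2) with hle | hgt
  · rw [eq_of_abs_le hL (by rw [abs_of_nonneg hr.1]; exact hle), abs_of_nonneg hr.1]
  · rw [← periodic.sub_eq, eq_of_abs_le hL (by rw [abs_of_neg (by linarith [hr.2])]; linarith),
      abs_of_neg (by linarith [hr.2]), ← Real.cosh_neg]
    ring_nf

theorem lipschitzWith (hs : 0 < s) (hL : 0 < L) : LipschitzWith 2⁻¹ (greenKernel s L) := by
  have hD : 0 < 2 * s * Real.sinh (s * L / 2) := by
    have := Real.sinh_pos_iff.2 (by positivity : 0 < s * L / 2)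
    positivity
  set Φ : ℝ → ℝ := fun r => Real.cosh (s * (r - L / 2)) / (2 * s * Real.sinh (s * L / 2))
  have hΦ : LipschitzOnWith 2⁻¹ Φ (Icc 0 (L / 2)) := by
    refine (convex_Icc _ _).lipschitzOnWith_of_nnnorm_hasDerivWithin_le
      (f' := fun r => s * Real.sinh (s * (r - L / 2)) / (2 * s * Real.sinh (s * L / 2)))
      (fun r _ => ?_) (fun r hr => ?_)
    · have := (((hasDerivAt_id' r).sub_const (L / 2)).const_mul s).cosh.div_const
        (2 * s * Real.sinh (s * L / 2))
      exact (this.congr_deriv (by ring)).hasDerivWithinAt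
    · rw [← NNReal.coe_le_coe, coe_nnnorm, Real.norm_eq_abs, abs_div, abs_mul, abs_of_pos hs,
        abs_of_pos hD, Real.abs_sinh, NNReal.coe_inv, NNReal.coe_ofNat,
        div_le_iff₀ hD]
      have : |s * (r - L / 2)| ≤ s * L / 2 := by
        rw [abs_mul, abs_of_pos hs, abs_of_nonpos (by linarith [hr.2])]
        nlinarith [hr.1]
      have := Real.sinh_le_sinh.2 this
      nlinarith
  have hnorm : LipschitzWith 1 fun z : ℝ => ‖(z : AddCircle L)‖ :=
    LipschitzWith.of_dist_le_mul fun a b => by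
      rw [NNReal.coe_one, one_mul, Real.dist_eq, dist_eq_norm]
      calc |‖(a : AddCircle L)‖ - ‖(b : AddCircle L)‖|
          ≤ ‖(a : AddCircle L) - b‖ := abs_norm_sub_norm_le _ _
        _ ≤ ‖a - b‖ := QuotientAddGroup.norm_mk_le_norm
  have := hΦ.comp (lipschitzOnWith_univ.2 hnorm) fun z _ =>
    ⟨norm_nonneg _, by simpa [abs_of_pos hL] using AddCircle.norm_le_half_period L hL.ne'⟩
  rw [mul_one, lipschitzOnWith_univ] at this
  exact this

theorem hasDerivAt_of_mem_Ioo (hL : 0 < L) {u : ℝ} (hu : u ∈ Ioo (-(L / 2)) 0) :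
    HasDerivAt (greenKernel s L)
      (s * Real.sinh (s * (u + L / 2)) / (2 * s * Real.sinh (s * L / 2))) u := by
  have hcosh := (((hasDerivAt_id' u).add_const (L / 2)).const_mul s).cosh.div_const
    (2 * s * Real.sinh (s * L / 2))
  refine (hcosh.congr_deriv (by ring)).congr_of_eventuallyEq ?_
  filter_upwards [isOpen_Ioo.mem_nhds hu] with w hw
  rw [eq_of_abs_le hL (by rw [abs_of_neg hw.2]; linarith [hw.1]), abs_of_neg hw.2,
    ← Real.cosh_neg]
  ring_nf

theorem integral_deriv_mul_pos (hs : 0 < s) (hL : 0 < L) {d : ℝ → ℝ} (hd : Continuous d)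
    (hnonneg : ∀ u ∈ Ioc (-(L / 2)) 0, 0 ≤ d u) (hpos : ∃ u ∈ Ioo (-(L / 2)) 0, 0 < d u) :
    0 < ∫ u in -(L / 2)..0, deriv (greenKernel s L) u * d u := by
  set κ : ℝ → ℝ := fun u => s * Real.sinh (s * (u + L / 2)) / (2 * s * Real.sinh (s * L / 2))
  have hD : 0 < 2 * s * Real.sinh (s * L / 2) := by
    have := Real.sinh_pos_iff.2 (by positivity : 0 < s * L / 2)
    positivity
  rw [intervalIntegral.integral_congr_ae (g := fun u => κ u * d u)]
  · obtain ⟨u₀, hu₀, hd₀⟩ := hpos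
    refine intervalIntegral.integral_pos (by linarith) (by fun_prop)
      (fun u hu => mul_nonneg ?_ (hnonneg u hu)) ⟨u₀, Ioo_subset_Icc_self hu₀, mul_pos ?_ hd₀⟩
    · exact div_nonneg (mul_nonneg hs.le (Real.sinh_nonneg_iff.2 (by nlinarith [hu.1]))) hD.le
    · exact div_pos (mul_pos hs (Real.sinh_pos_iff.2 (by nlinarith [hu₀.1]))) hD
  · filter_upwards [volume.ae_ne 0] with u hu₀ hu
    rw [uIoc_of_le (by linarith)] at hu
    rw [(hasDerivAt_of_mem_Ioo hL ⟨hu.1, lt_of_le_of_ne hu.2 hu₀⟩).deriv]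

end greenKernel

theorem stmt11 (l L : ℝ) (hl : 0 < l) (hL : 0 < L) (h : ℝ → ℝ)
    (hcont : Continuous h) (hper : Function.Periodic h L)
    (heven : ∀ x, h (-x) = h x)
    (hnc : ∃ x y, h x ≠ h y)
    (hmono : MonotoneOn h (Ioo (-(L / 2)) 0)) :
    let G : ℝ → ℝ := fun x =>
      Real.cosh (Real.sqrt l * (x - L * (⌊x / L⌋ : ℝ) - L / 2)) /
        (2 * Real.sqrt l * Real.sinh (Real.sqrt l * L / 2))
    let φ : ℝ → ℝ := fun x => ∫ y in (-(L / 2))..(L / 2), G (x - y) * h y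
    ∀ x ∈ Ioo (-(L / 2)) (0:ℝ), 0 < deriv φ x := by
  intro G φ x hx
  set s := Real.sqrt l
  have hs : 0 < s := Real.sqrt_pos.2 hl
  have hG : G = greenKernel s L := funext (greenKernel.eq_cosh_floor hL)
  have hmono' : MonotoneOn h (Icc (-(L / 2)) 0) := by
    simpa [closure_Ioo (by linarith : -(L / 2) ≠ 0)] using hmono.closure_of_continuous hcont
  have hK := greenKernel.lipschitzWith hs hL
  have hφ : HasDerivAt φ (∫ y in -(L / 2)..L / 2, deriv (greenKernel s L) (x - y) * h y) x := by
    simpa only [φ, hG] using hasDerivAt_intervalIntegral_sub_mul hK (hcont.intervalIntegrable _ _) x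
  rw [hφ.deriv, intervalIntegral_sub_mul_eq_of_odd greenKernel.periodic.deriv
    greenKernel.even.deriv hper
    (fun a b => hK.lipschitzOnWith.absolutelyContinuousOnInterval.intervalIntegrable_deriv)
    hcont x]
  obtain ⟨u₀, hu₀, hlt⟩ := exists_apply_add_lt_apply_sub hL heven hper hmono' hnc hx
  exact greenKernel.integral_deriv_mul_pos hs hL (by fun_prop)
    (fun u hu => sub_nonneg.2 (apply_add_le_apply_sub heven hper hmono' (Ioo_subset_Icc_self hx)
      (Ioc_subset_Icc_self hu)))
    ⟨u₀, hu₀, sub_pos.2 hlt⟩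
end

section
/- Let λ > 0 and h : ℝ → ℝ continuous, L-periodic, even, non-constant, non-decreasing on (−L/2,0), and φ = G_λ * h the solution of λφ − φ'' = h. Then φ''(0) < 0 and φ''(−L/2) > 0. -/
/-!
Since `h` is monotone on `[-L/2, 0]`, even and `L`-periodic, its maximum is `h 0` and its minimum
`h (-L/2)`. At a maximum point of `φ` we have `φ'' ≤ 0`, so `l φ ≤ max h = h 0` everywhere, and
`φ''(0) = l φ(0) - h(0) ≤ 0`. If equality held, `u = h 0 - l φ` would satisfy `u ≥ 0`,
`u(0) = u'(0) = 0` and `u'' ≤ l u`; a Grönwall argument for `u' + √l u` forces `u = 0` on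
`[0, ∞)`, hence `h = h 0` there and, by periodicity, everywhere. The statement at `-L/2` is the
same argument applied to `-h` and `-φ`.
-/

open Set Filter Topology Function

theorem Filter.EventuallyEq.deriv_deriv_eq_zero {f : ℝ → ℝ} {x c : ℝ}
    (hf : f =ᶠ[𝓝 x] fun _ => c) : deriv (deriv f) x = 0 := by
  simp [hf.deriv.deriv_eq]

theorem IsLocalMax.deriv_deriv_nonpos {f : ℝ → ℝ} {a : ℝ} (hmax : IsLocalMax f a)
    (hf : ContinuousAt f a) : deriv (deriv f) a ≤ 0 := by
  by_contra! hpos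
  -- A point that is both a local maximum and a local minimum has a constant neighbourhood.
  have hconst : f =ᶠ[𝓝 a] fun _ => f a :=
    (hmax.and (isLocalMin_of_deriv_deriv_pos hpos hmax.deriv_eq_zero hf)).mono
      fun _ hx => le_antisymm hx.1 hx.2
  exact hpos.ne' hconst.deriv_deriv_eq_zero

theorem Function.Periodic.exists_forall_le_of_continuous {f : ℝ → ℝ} {c : ℝ} (hp : Periodic f c)
    (hc : c ≠ 0) (hf : Continuous f) : ∃ a, ∀ x, f x ≤ f a := by
  obtain ⟨-, ⟨a, rfl⟩, ha⟩ := (hp.compact_of_continuous hc hf).exists_isGreatest (range_nonempty f)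
  exact ⟨a, fun x => ha (mem_range_self x)⟩

theorem Function.Periodic.eq_of_forall_Ioi {f : ℝ → ℝ} {c a b : ℝ} (hp : Periodic f c)
    (hc : 0 < c) (hf : ∀ x ∈ Ioi a, f x = b) (x : ℝ) : f x = b := by
  obtain ⟨y, hy, hxy⟩ := hp.exists_mem_Ioc hc x a
  rw [hxy, hf y hy.1]

theorem MonotoneOn.Icc_of_Ioo {f : ℝ → ℝ} {a b : ℝ} (hmono : MonotoneOn f (Ioo a b))
    (hf : ContinuousOn f (Icc a b)) : MonotoneOn f (Icc a b) := by
  intro x hx y hy hxy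
  rcases hxy.eq_or_lt with rfl | hxy
  · rfl
  have hsub : Ioo x y ⊆ Ioo a b := Ioo_subset_Ioo hx.1 hy.2
  have hcont : ∀ z ∈ Icc x y, ContinuousWithinAt f (Ioo x y) z := fun z hz =>
    (hf z ⟨hx.1.trans hz.1, hz.2.trans hy.2⟩).mono (hsub.trans Ioo_subset_Icc_self)
  have hleft : ∀ w ∈ Ioo x y, f x ≤ f w := fun w hw =>
    ContinuousWithinAt.closure_le (s := Ioo x w)
      (by rw [closure_Ioo hw.1.ne]; exact left_mem_Icc.2 hw.1.le)
      ((hcont x (left_mem_Icc.2 hxy.le)).mono (Ioo_subset_Ioo_right hw.2.le))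
      continuousWithinAt_const fun z hz =>
        hmono (hsub ⟨hz.1, hz.2.trans hw.2⟩) (hsub hw) hz.2.le
  exact ContinuousWithinAt.closure_le (by rw [closure_Ioo hxy.ne]; exact right_mem_Icc.2 hxy.le)
    continuousWithinAt_const (hcont y (right_mem_Icc.2 hxy.le)) hleft

theorem eqOn_zero_of_deriv_deriv_le_mul {l : ℝ} (hl : 0 ≤ l) {u : ℝ → ℝ} (hu : ContDiff ℝ 2 u)
    (hnn : ∀ x, 0 ≤ u x) (hineq : ∀ x, deriv (deriv u) x ≤ l * u x) {a : ℝ} (ha : u a = 0) :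
    EqOn u 0 (Ici a) := by
  have hd1 : Differentiable ℝ u := hu.differentiable (by norm_num)
  have hd2 : Differentiable ℝ (deriv u) := hu.differentiable_deriv_two
  have hda : deriv u a = 0 :=
    IsLocalMin.deriv_eq_zero (.of_forall fun x => ha ▸ hnn x)
  -- With `c² = l`, `w = u' + c u` satisfies `w' ≤ c w` and `w a = 0`.
  set c := √l
  have hc : 0 ≤ c := Real.sqrt_nonneg l
  set w : ℝ → ℝ := fun x => deriv u x + c * u x
  have hw : ∀ x, HasDerivAt w (deriv (deriv u) x + c * deriv u x) x := fun x =>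
    (hd2 x).hasDerivAt.add ((hd1 x).hasDerivAt.const_mul c)
  have hw_nonpos : ∀ x ∈ Ici a, w x ≤ 0 := by
    intro x hx
    have := le_gronwallBound_of_liminf_deriv_right_le (f := w) (δ := 0) (K := c) (ε := 0)
      (fun y _ => (hw y).continuousAt.continuousWithinAt)
      (fun y _ _ hr => (hw y).hasDerivWithinAt.liminf_right_slope_le hr)
      (by simp [w, ha, hda])
      (fun y _ => by
        have hcc : c * (c * u y) = l * u y := by rw [← mul_assoc, Real.mul_self_sqrt hl]
        simp only [w]
        linarith [hineq y]) x ⟨hx, le_rfl⟩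
    rwa [gronwallBound_ε0_δ0] at this
  have hanti : AntitoneOn u (Ici a) :=
    antitoneOn_of_deriv_nonpos (convex_Ici a) hd1.continuous.continuousOn hd1.differentiableOn
      fun x hx => by
        rw [interior_Ici] at hx
        nlinarith [hw_nonpos x (mem_Ici.2 hx.le), hnn x]
  intro x hx
  have hle := hanti self_mem_Ici hx hx
  rw [ha] at hle
  exact le_antisymm hle (hnn x)

theorem deriv_deriv_neg_of_forall_le {l L : ℝ} (hl : 0 < l) (hL : 0 < L) {h φ : ℝ → ℝ}
    (hper : Periodic h L) (hnc : ∃ x y, h x ≠ h y) (hφ : ContDiff ℝ 2 φ)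
    (hφper : Periodic φ L) (heq : ∀ x, l * φ x - deriv (deriv φ) x = h x) {a : ℝ}
    (hmax : ∀ x, h x ≤ h a) : deriv (deriv φ) a < 0 := by
  by_contra! hnn
  obtain ⟨p, q, hpq⟩ := hnc
  apply hpq
  -- Maximum principle: at a maximum point of `φ`, `l φ = h + φ'' ≤ h a`.
  have hφ_le : ∀ x, l * φ x ≤ h a := by
    obtain ⟨x₀, hx₀⟩ := hφper.exists_forall_le_of_continuous hL.ne' hφ.continuous
    have hx₀'' := IsLocalMax.deriv_deriv_nonpos (.of_forall hx₀) hφ.continuous.continuousAt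
    intro x
    nlinarith [hx₀ x, heq x₀, hmax x₀]
  set u : ℝ → ℝ := fun x => h a - l * φ x
  have hu'' : ∀ x, deriv (deriv u) x = -(l * deriv (deriv φ) x) := fun x => by
    simp [u, deriv_const_sub', deriv_const_mul_field']
  have hu_zero : EqOn u 0 (Ici a) :=
    eqOn_zero_of_deriv_deriv_le_mul hl.le (contDiff_const.sub (contDiff_const.mul hφ))
      (fun x => sub_nonneg.2 (hφ_le x))
      (fun x => by nlinarith [hu'' x, heq x, hmax x])
      (by nlinarith [heq a, hφ_le a])
  have hconst : ∀ x ∈ Ioi a, h x = h a := by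
    intro x hx
    have hu_ev : u =ᶠ[𝓝 x] fun _ => 0 :=
      eventually_of_mem (Ioi_mem_nhds hx) fun y hy => hu_zero (mem_Ici.2 hy.le)
    have hφ'' : deriv (deriv φ) x = 0 := by
      simpa [hl.ne', hu_ev.deriv_deriv_eq_zero] using hu'' x
    linarith [heq x, hu_ev.self_of_nhds]
  rw [hper.eq_of_forall_Ioi hL hconst p, hper.eq_of_forall_Ioi hL hconst q]

theorem Function.Periodic.mem_Icc_of_even_of_monotoneOn {L : ℝ} {h : ℝ → ℝ} (hper : Periodic h L)
    (hL : 0 < L) (hcont : Continuous h) (heven : ∀ x, h (-x) = h x)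
    (hmono : MonotoneOn h (Ioo (-(L / 2)) 0)) (x : ℝ) : h x ∈ Icc (h (-(L / 2))) (h 0) := by
  have hIcc := hmono.Icc_of_Ioo hcont.continuousOn
  have hhalf : ∀ x ∈ Icc (-(L / 2)) (L / 2), h x ∈ Icc (h (-(L / 2))) (h 0) := by
    intro x hx
    have habs : h (-|x|) = h x := by
      rcases abs_choice x with hx' | hx' <;> simp [hx', heven]
    have hmem : -|x| ∈ Icc (-(L / 2)) 0 := ⟨neg_le_neg (abs_le.2 hx), by simp⟩
    rw [← habs]
    exact ⟨hIcc (left_mem_Icc.2 (by linarith)) hmem hmem.1,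
      hIcc hmem (right_mem_Icc.2 (by linarith)) hmem.2⟩
  obtain ⟨y, hy, hxy⟩ := hper.exists_mem_Ico hL x (-(L / 2))
  rw [hxy]
  exact hhalf y ⟨hy.1, by linarith [hy.2]⟩

theorem stmt12 (l L : ℝ) (hl : 0 < l) (hL : 0 < L) (h φ : ℝ → ℝ)
    (hcont : Continuous h) (hper : Function.Periodic h L)
    (heven : ∀ x, h (-x) = h x)
    (hnc : ∃ x y, h x ≠ h y)
    (hmono : MonotoneOn h (Ioo (-(L / 2)) 0))
    (hφ : ContDiff ℝ 2 φ) (hφper : Function.Periodic φ L)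
    (heq : ∀ x, l * φ x - deriv (deriv φ) x = h x) :
    deriv (deriv φ) 0 < 0 ∧ 0 < deriv (deriv φ) (-(L / 2)) := by
  have hbounds := hper.mem_Icc_of_even_of_monotoneOn hL hcont heven hmono
  refine ⟨deriv_deriv_neg_of_forall_le hl hL hper hnc hφ hφper heq fun x => (hbounds x).2, ?_⟩
  -- The minimum of `h` is the maximum of `-h`, and `-φ` solves the equation with `-h`.
  have := deriv_deriv_neg_of_forall_le (h := -h) (φ := -φ) hl hL (hper.comp Neg.neg)
    (by simpa using hnc) hφ.neg (hφper.comp Neg.neg)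
    (fun x => by simp [← heq x]; ring) fun x => neg_le_neg (hbounds x).1
  simpa using this
end
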